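/- arXiv:2106.16005 — 4 statements merged into one kernel-verified Lean document; each statement's English description precedes it below -/
import Mathlib

section
/- Let R be a complete discrete valuation ring whose residue field is algebraically closed of characteristic p, let q = p^h for some integer h ≥ 1, and let σ : R → R be a ring endomorphism such that σ(x) ≡ x^q modulo the maximal ideal of R for every x ∈ R. Then for every unit ε₁ ∈ R^× and every element ε₂ ∈ R there exists a unit x ∈ R^× such that ε₁·σ(x) − x = ε₂. -/
/-!
Successive approximation. Modulo `𝔪` the equation `ε₁ σ(x) - x = ε₂` reads
`ε̄₁ x̄^q - x̄ = ε̄₂`, which has a nonzero solution because the residue field is algebraically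
closed. If the error of an approximate solution lies in `𝔪^(n+1) = (ϖ)`, correcting by `c ϖ`
changes it by `ϖ (ε₁ s σ(c) - c)`, where `σ(ϖ) = s ϖ`; so modulo `𝔪^(n+2)` the error can be
killed by taking for `c̄` a root of a polynomial of degree `q` over the residue field. By
completeness the approximations converge, the limit is an exact solution because
`x ↦ ε₁ σ(x) - x` preserves every `𝔪^n`, and it is a unit because it lifts `x̄ ≠ 0`.
-/

open Polynomial IsLocalRing

namespace IsAlgClosed

variable {k : Type*} [Field k] [IsAlgClosed k] {q : ℕ}

theorem exists_ne_zero_mul_pow_sub_eq (hq : 2 ≤ q) {a : k} (ha : a ≠ 0) (b : k) :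
    ∃ c ≠ 0, a * c ^ q - c = b := by
  rcases eq_or_ne b 0 with rfl | hb
  · obtain ⟨c, hc⟩ := exists_pow_nat_eq a⁻¹ (by omega : 0 < q - 1)
    refine ⟨c, ?_, ?_⟩
    · rintro rfl
      exact inv_ne_zero ha (hc ▸ zero_pow (by omega))
    · rw [← Nat.sub_add_cancel (by omega : 1 ≤ q), pow_succ, hc, mul_inv_cancel_left₀ ha, sub_self]
  · have hdeg : (C a * X ^ q - X - C b).degree ≠ 0 := by
      refine degree_ne_of_natDegree_ne (n := 0) (ne_of_eq_of_ne ?_ (by omega : q ≠ 0))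
      compute_degree!
      · simp [ha, show 1 ≠ q by omega, show q ≠ 0 by omega]
      · omega
    obtain ⟨c, hc⟩ := exists_root _ hdeg
    simp only [IsRoot, eval_sub, eval_mul, eval_C, eval_pow, eval_X, sub_eq_zero] at hc
    refine ⟨c, ?_, hc⟩
    rintro rfl
    exact hb (by simpa [zero_pow (by omega : q ≠ 0)] using hc.symm)

theorem exists_mul_pow_sub_eq (hq : 2 ≤ q) (a b : k) : ∃ c, a * c ^ q - c = b := by
  rcases eq_or_ne a 0 with rfl | ha
  · exact ⟨-b, by simp⟩
  · obtain ⟨c, -, hc⟩ := exists_ne_zero_mul_pow_sub_eq hq ha b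
    exact ⟨c, hc⟩

end IsAlgClosed

namespace IsPrecomplete

variable {R : Type*} [CommRing R] {I : Ideal R}

theorem exists_forall_sub_mem_pow [IsPrecomplete I R] (z : ℕ → R)
    (hz : ∀ n, z (n + 1) - z n ∈ I ^ n) : ∃ x, ∀ n, z n - x ∈ I ^ n := by
  have hcauchy : ∀ i j, z (i + j) - z i ∈ I ^ i := by
    intro i j
    induction j with
    | zero => simp
    | succ j ih =>
      have hstep := Ideal.pow_le_pow_right (Nat.le_add_right i j) (hz (i + j))
      simpa [← add_assoc] using add_mem hstep ih
  obtain ⟨x, hx⟩ := IsPrecomplete.prec' (I := I) z fun {m n} hmn => by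
    obtain ⟨j, rfl⟩ := Nat.exists_eq_add_of_le hmn
    rw [SModEq.sub_mem, smul_eq_mul, Ideal.mul_top, ← neg_mem_iff, neg_sub]
    exact hcauchy m j
  refine ⟨x, fun n => ?_⟩
  simpa only [SModEq.sub_mem, smul_eq_mul, Ideal.mul_top] using hx n

end IsPrecomplete

namespace IsAdicComplete

variable {R : Type*} [CommRing R] {I : Ideal R}

theorem exists_map_eq_of_sub_mem [IsAdicComplete I R] (L : R →+ R)
    (hL : ∀ n, ∀ x ∈ I ^ n, L x ∈ I ^ n)
    (hstep : ∀ n, ∀ w ∈ I ^ (n + 1), ∃ δ ∈ I ^ (n + 1), L δ - w ∈ I ^ (n + 2))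
    {y₀ w : R} (hy₀ : L y₀ - w ∈ I) : ∃ y, y - y₀ ∈ I ∧ L y = w := by
  have hcorr : ∀ n r, ∃ δ, r ∈ I ^ (n + 1) → δ ∈ I ^ (n + 1) ∧ L δ - r ∈ I ^ (n + 2) := by
    intro n r
    by_cases hr : r ∈ I ^ (n + 1)
    · obtain ⟨δ, hδ, hLδ⟩ := hstep n r hr
      exact ⟨δ, fun _ => ⟨hδ, hLδ⟩⟩
    · exact ⟨0, fun h => absurd h hr⟩
  choose δ hδ using hcorr
  let z : ℕ → R := fun n => Nat.rec y₀ (fun n zn => zn + δ n (w - L zn)) n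
  have hz0 : z 0 = y₀ := rfl
  have hz : ∀ n, z (n + 1) = z n + δ n (w - L (z n)) := fun _ => rfl
  have hres : ∀ n, L (z n) - w ∈ I ^ (n + 1) := by
    intro n
    induction n with
    | zero => rwa [hz0, zero_add, pow_one]
    | succ n ih =>
      have := (hδ n (w - L (z n)) (by simpa using neg_mem ih)).2
      rw [hz, map_add]
      convert this using 1
      abel
  have hsucc : ∀ n, z (n + 1) - z n ∈ I ^ (n + 1) := fun n => by
    simpa [hz] using (hδ n (w - L (z n)) (by simpa using neg_mem (hres n))).1
  obtain ⟨y, hy⟩ := IsPrecomplete.exists_forall_sub_mem_pow z fun n =>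
    Ideal.pow_le_pow_right n.le_succ (hsucc n)
  refine ⟨y, ?_, ?_⟩
  · have h1 := hy 1
    have h0 := hsucc 0
    rw [pow_one] at h1
    rw [zero_add, pow_one] at h0
    simpa [hz0] using sub_mem h0 h1
  · rw [← sub_eq_zero]
    refine IsHausdorff.haus' (I := I) _ fun n => ?_
    rw [SModEq.sub_mem, smul_eq_mul, Ideal.mul_top, sub_zero]
    have hLn := hL n _ (hy n)
    have hrn := Ideal.pow_le_pow_right n.le_succ (hres n)
    simpa using sub_mem hrn hLn

end IsAdicComplete

namespace IsLocalRing

variable {R : Type*} [CommRing R] [IsLocalRing R] {q : ℕ} {σ : R →+* R}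

theorem residue_map_eq_pow (hσ : ∀ x, σ x - x ^ q ∈ maximalIdeal R) (x : R) :
    residue R (σ x) = residue R x ^ q := by
  rw [← sub_eq_zero, ← map_pow, ← map_sub, residue_eq_zero_iff]
  exact hσ x

theorem map_mem_maximalIdeal_pow (hσ : ∀ x, σ x - x ^ q ∈ maximalIdeal R) (hq : q ≠ 0) {n : ℕ}
    {x : R} (hx : x ∈ maximalIdeal R ^ n) : σ x ∈ maximalIdeal R ^ n := by
  have hle : (maximalIdeal R).map σ ≤ maximalIdeal R := Ideal.map_le_iff_le_comap.2 fun y hy => by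
    rw [Ideal.mem_comap, ← residue_eq_zero_iff, residue_map_eq_pow hσ,
      (residue_eq_zero_iff y).2 hy, zero_pow hq]
  have hmap := Ideal.mem_map_of_mem σ hx
  rw [Ideal.map_pow] at hmap
  exact Ideal.pow_right_mono hle n hmap

variable [IsAlgClosed (ResidueField R)]

theorem exists_isUnit_mul_map_sub_sub_mem (hσ : ∀ x, σ x - x ^ q ∈ maximalIdeal R) (hq : 2 ≤ q)
    (ε : Rˣ) (w : R) : ∃ x, IsUnit x ∧ ε * σ x - x - w ∈ maximalIdeal R := by
  obtain ⟨c, hc0, hc⟩ := IsAlgClosed.exists_ne_zero_mul_pow_sub_eq hq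
    ((residue_ne_zero_iff_isUnit _).2 ε.isUnit) (residue R w)
  obtain ⟨x, rfl⟩ := residue_surjective c
  refine ⟨x, (residue_ne_zero_iff_isUnit x).1 hc0, ?_⟩
  rw [← residue_eq_zero_iff, map_sub, map_sub, map_mul, residue_map_eq_pow hσ, hc, sub_self]

theorem exists_mem_span_mul_map_sub_sub_mem (hσ : ∀ x, σ x - x ^ q ∈ maximalIdeal R)
    (hq : 2 ≤ q) (ε : R) {ϖ w : R} (hϖ : σ ϖ ∈ Ideal.span {ϖ}) (hw : w ∈ Ideal.span {ϖ}) :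
    ∃ δ ∈ Ideal.span {ϖ}, ε * σ δ - δ - w ∈ Ideal.span {ϖ} * maximalIdeal R := by
  obtain ⟨s, hs⟩ := Ideal.mem_span_singleton'.1 hϖ
  obtain ⟨v, rfl⟩ := Ideal.mem_span_singleton'.1 hw
  obtain ⟨c, hc⟩ := IsAlgClosed.exists_mul_pow_sub_eq hq (residue R (ε * s)) (residue R v)
  obtain ⟨c, rfl⟩ := residue_surjective c
  refine ⟨c * ϖ, Ideal.mul_mem_left _ _ (Ideal.mem_span_singleton_self ϖ), ?_⟩
  have hres : ε * s * σ c - c - v ∈ maximalIdeal R := by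
    rw [← residue_eq_zero_iff, map_sub, map_sub, map_mul (residue R) (ε * s),
      residue_map_eq_pow hσ, hc, sub_self]
  have hfactor : ε * σ (c * ϖ) - c * ϖ - v * ϖ = ϖ * (ε * s * σ c - c - v) := by
    rw [map_mul, ← hs]
    ring
  rw [hfactor]
  exact Ideal.mul_mem_mul (Ideal.mem_span_singleton_self ϖ) hres

end IsLocalRing

theorem stmt_0_general (p : ℕ) (hp : p.Prime) (h : ℕ) (hh : 1 ≤ h) (q : ℕ) (hq : q = p ^ h)
    (R : Type*) [CommRing R] [IsDomain R] [IsDiscreteValuationRing R]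
    [IsAdicComplete (IsLocalRing.maximalIdeal R) R]
    [IsAlgClosed (IsLocalRing.ResidueField R)]
    (σ : R →+* R) (hσ : ∀ x : R, σ x - x ^ q ∈ IsLocalRing.maximalIdeal R)
    (ε₁ : Rˣ) (ε₂ : R) :
    ∃ x : Rˣ, (ε₁ : R) * σ x - x = ε₂ := by
  have hq2 : 2 ≤ q := hq ▸ hp.two_le.trans (Nat.le_self_pow (by omega) p)
  obtain ⟨π, hπ⟩ := IsDiscreteValuationRing.exists_irreducible R
  have hspan : ∀ n, maximalIdeal R ^ n = Ideal.span {π ^ n} := fun n => by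
    rw [(IsDiscreteValuationRing.irreducible_iff_uniformizer π).1 hπ, Ideal.span_singleton_pow]
  let L : R →+ R := AddMonoidHom.mk' (fun x => ε₁ * σ x - x) fun x y => by rw [map_add]; ring
  have hL : ∀ n, ∀ x ∈ maximalIdeal R ^ n, L x ∈ maximalIdeal R ^ n := fun n x hx =>
    sub_mem (Ideal.mul_mem_left _ _ (map_mem_maximalIdeal_pow hσ (by omega) hx)) hx
  have hstep : ∀ n, ∀ w ∈ maximalIdeal R ^ (n + 1),
      ∃ δ ∈ maximalIdeal R ^ (n + 1), L δ - w ∈ maximalIdeal R ^ (n + 2) := by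
    intro n w hw
    have hσπ := map_mem_maximalIdeal_pow hσ (by omega)
      (hspan (n + 1) ▸ Ideal.mem_span_singleton_self (π ^ (n + 1)))
    rw [pow_succ _ (n + 1), hspan (n + 1)]
    rw [hspan (n + 1)] at hw hσπ
    exact exists_mem_span_mul_map_sub_sub_mem hσ hq2 ε₁ hσπ hw
  obtain ⟨x₀, hx₀, hx₀w⟩ := exists_isUnit_mul_map_sub_sub_mem hσ hq2 ε₁ ε₂
  obtain ⟨x, hxx₀, hx⟩ := IsAdicComplete.exists_map_eq_of_sub_mem L hL hstep hx₀w
  have hxunit : IsUnit x := by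
    rw [← residue_ne_zero_iff_isUnit, ← sub_add_cancel x x₀, map_add,
      (residue_eq_zero_iff _).2 hxx₀, zero_add, residue_ne_zero_iff_isUnit]
    exact hx₀
  exact ⟨hxunit.unit, hx⟩

theorem stmt_0 (p : ℕ) (hp : p.Prime) (h : ℕ) (hh : 1 ≤ h) (q : ℕ) (hq : q = p ^ h)
    (R : Type*) [CommRing R] [IsDomain R] [IsDiscreteValuationRing R]
    [IsAdicComplete (IsLocalRing.maximalIdeal R) R]
    [IsAlgClosed (IsLocalRing.ResidueField R)]
    (hchar : CharP (IsLocalRing.ResidueField R) p)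
    (σ : R →+* R) (hσ : ∀ x : R, σ x - x ^ q ∈ IsLocalRing.maximalIdeal R)
    (ε₁ : Rˣ) (ε₂ : R) :
    ∃ x : Rˣ, (ε₁ : R) * σ x - x = ε₂ :=
  stmt_0_general p hp h hh q hq R σ hσ ε₁ ε₂
end

section
/- Let p be a prime, let k̄ be an algebraic closure of the field with p elements, let W = 𝕎(k̄) be the ring of p-typical Witt vectors of k̄, and let φ : W → W be the Witt vector Frobenius. Then for every unit ε₁ ∈ W^× and every ε₂ ∈ W there exists a unit x ∈ W^× such that ε₁·φ(x) − x = ε₂. -/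
/-!
Since `ε` is a unit, `frobeniusRotation` provides a unit `b` with `ε φ(b) = b`, and the substitution
`x = b u` turns the equation into `φ(u) - u = b⁻¹ y`. The map `φ - 1` is surjective on `W(k)` for `k`
algebraically closed: a solution modulo `V^n` is corrected by `V^n [z]`, with `z` a root of an
Artin–Schreier polynomial `X^p - X + c`, and these approximations converge coordinatewise.
As `W(k)` is local and `φ(1) = 1`, one of `u` and `u + 1` is a unit solution.
-/

open Function Polynomial

theorem IsAlgClosed.exists_pow_sub_self_eq {k : Type*} [Field k] [IsAlgClosed k] {n : ℕ}
    (hn : 1 < n) (c : k) : ∃ z : k, z ^ n - z = c := by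
  have hdeg : (X ^ n - X - C c : k[X]).natDegree = n := by
    rw [natDegree_sub_C, FiniteField.X_pow_card_sub_X_natDegree_eq k hn]
  obtain ⟨z, hz⟩ := IsAlgClosed.exists_root (X ^ n - X - C c) (by
    rw [degree_eq_natDegree (ne_zero_of_natDegree_gt (hdeg ▸ hn)), hdeg]
    exact_mod_cast (zero_lt_one.trans hn).ne')
  exact ⟨z, by simpa [sub_eq_zero] using hz⟩

namespace WittVector

variable {p : ℕ} [hp : Fact p.Prime]

local notation "𝕎" => WittVector p

section CommRing

variable {R : Type*} [CommRing R]

theorem truncate_eq_truncate_iff {n : ℕ} {x y : 𝕎 R} :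
    truncate n x = truncate n y ↔ ∀ i < n, x.coeff i = y.coeff i := by
  refine ⟨fun h i hi => ?_, fun h => TruncatedWittVector.ext fun i => ?_⟩
  · simpa only [coeff_truncate] using congr_arg (TruncatedWittVector.coeff ⟨i, hi⟩) h
  · simpa only [coeff_truncate] using h i i.is_lt

theorem truncate_eq_zero_iff {n : ℕ} {x : 𝕎 R} :
    truncate n x = 0 ↔ ∀ i < n, x.coeff i = 0 := by
  simpa using truncate_eq_truncate_iff (y := (0 : 𝕎 R)) (n := n)

theorem truncate_iterate_verschiebung (n : ℕ) (x : 𝕎 R) :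
    truncate n (verschiebung^[n] x) = 0 :=
  truncate_eq_zero_iff.2 fun _ hi => iterate_verschiebung_coeff_eq_zero x hi

theorem eq_zero_of_forall_truncate_eq_zero {x : 𝕎 R} (h : ∀ n, truncate n x = 0) : x = 0 := by
  ext i
  rw [zero_coeff]
  exact truncate_eq_zero_iff.1 (h (i + 1)) i i.lt_succ_self

theorem exists_forall_truncate_eq {X : ℕ → 𝕎 R}
    (hX : ∀ n, truncate n (X (n + 1)) = truncate n (X n)) :
    ∃ L : 𝕎 R, ∀ n, truncate n L = truncate n (X n) := by
  have hstab : ∀ i n, i < n → (X n).coeff i = (X (i + 1)).coeff i := by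
    intro i n hin
    induction n, hin using Nat.le_induction with
    | base => rfl
    | succ n hin ih => rw [truncate_eq_truncate_iff.1 (hX n) i hin, ih]
  refine ⟨mk p fun i => (X (i + 1)).coeff i, fun n => ?_⟩
  exact truncate_eq_truncate_iff.2 fun i hi => (hstab i n hi).symm

theorem exists_forall_truncate_of_lift {P : ℕ → 𝕎 R → Prop} {x₀ : 𝕎 R} (h₀ : P 0 x₀)
    (hlift : ∀ n x, P n x → ∃ x', P (n + 1) x' ∧ truncate n x' = truncate n x) :
    ∃ L : 𝕎 R, ∀ n, ∃ x, P n x ∧ truncate n L = truncate n x := by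
  choose! lift hlift_spec hlift_truncate using hlift
  let X : ℕ → 𝕎 R := fun n => Nat.rec x₀ (fun n x => lift n x) n
  have hX : ∀ n, P n (X n) := fun n => by
    induction n with
    | zero => exact h₀
    | succ n ih => exact hlift_spec n _ ih
  obtain ⟨L, hL⟩ := exists_forall_truncate_eq (X := X) fun n => hlift_truncate n _ (hX n)
  exact ⟨L, fun n => ⟨X n, hX n, hL n⟩⟩

end CommRing

section CharP

variable {R : Type*} [CommRing R] [CharP R p]

theorem truncate_frobenius_congr {n : ℕ} {x y : 𝕎 R} (h : truncate n x = truncate n y) :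
    truncate n (frobenius x) = truncate n (frobenius y) :=
  truncate_eq_truncate_iff.2 fun i hi => by
    rw [coeff_frobenius_charP, coeff_frobenius_charP, truncate_eq_truncate_iff.1 h i hi]

end CharP

section IsAlgClosed

variable {k : Type*} [Field k] [CharP k p] [IsAlgClosed k]

-- The correction is `V^n [z]`, with `z` a root of `X^p - X + w₀` where `φ x - x - y = V^n w`.
theorem exists_lift_frobenius_sub_self {n : ℕ} {x y : 𝕎 k}
    (hx : truncate n (frobenius x - x - y) = 0) :
    ∃ x', truncate (n + 1) (frobenius x' - x' - y) = 0 ∧ truncate n x' = truncate n x := by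
  set w := (frobenius x - x - y).shift n
  have hw : frobenius x - x - y = verschiebung^[n] w :=
    eq_iterate_verschiebung (truncate_eq_zero_iff.1 hx)
  obtain ⟨z, hz⟩ := IsAlgClosed.exists_pow_sub_self_eq hp.out.one_lt (-w.coeff 0)
  set t := teichmuller p z
  set u := w + (frobenius t - t)
  have hu : u = verschiebung (u.shift 1) := by
    refine eq_iterate_verschiebung (n := 1) fun i hi => ?_
    rw [Nat.lt_one_iff.1 hi, ← constantCoeff_apply]
    simp only [u, map_add, map_sub, constantCoeff_apply, coeff_frobenius_charP, t,
      teichmuller_coeff_zero, hz, add_neg_cancel]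
  refine ⟨x + verschiebung^[n] t, ?_, ?_⟩
  · have hsol : frobenius (x + verschiebung^[n] t) - (x + verschiebung^[n] t) - y
        = verschiebung^[n] u := by
      rw [map_add, ← verschiebung_frobenius_comm.iterate_left n t, iterate_map_add,
        iterate_map_sub, ← hw]
      ring
    rw [hsol, hu, ← iterate_succ_apply, truncate_iterate_verschiebung]
  · rw [map_add, truncate_iterate_verschiebung, add_zero]

theorem frobenius_sub_self_surjective : Surjective fun x : 𝕎 k => frobenius x - x := by
  intro y
  obtain ⟨L, hL⟩ :=
    exists_forall_truncate_of_lift (P := fun n x => truncate n (frobenius x - x - y) = 0)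
      (x₀ := 0) (by simp [truncate_eq_zero_iff]) fun _ _ hx => exists_lift_frobenius_sub_self hx
  refine ⟨L, sub_eq_zero.1 (eq_zero_of_forall_truncate_eq_zero fun n => ?_)⟩
  obtain ⟨x, hx, hLx⟩ := hL n
  simpa only [map_sub, truncate_frobenius_congr hLx, hLx] using hx

theorem exists_unit_frobenius_sub_self_eq (y : 𝕎 k) :
    ∃ u : (𝕎 k)ˣ, frobenius (u : 𝕎 k) - u = y := by
  obtain ⟨u, hu⟩ := frobenius_sub_self_surjective y
  rcases IsLocalRing.isUnit_or_isUnit_of_add_one (neg_add_cancel_left u 1) with hneg | hsucc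
  · obtain ⟨v, rfl⟩ := (IsUnit.neg_iff u).1 hneg
    exact ⟨v, hu⟩
  · refine ⟨hsucc.unit, ?_⟩
    rw [hsucc.unit_spec, map_add, map_one, ← hu]
    ring

theorem exists_unit_mul_frobenius_eq (a : (𝕎 k)ˣ) : ∃ b : (𝕎 k)ˣ, a * frobenius (b : 𝕎 k) = b := by
  have ha : (a : 𝕎 k).coeff 0 ≠ 0 := by
    simpa using (a.isUnit.map (constantCoeff (p := p) (R := k))).ne_zero
  have h1 : (1 : 𝕎 k).coeff 0 ≠ 0 := by simp
  have hb : (frobeniusRotation p ha h1).coeff 0 ≠ 0 := by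
    simpa [frobeniusRotation, frobeniusRotationCoeff] using RecursionBase.solution_nonzero p ha h1
  refine ⟨(isUnit_of_coeff_zero_ne_zero _ hb).unit, ?_⟩
  rw [IsUnit.unit_spec, mul_comm, frobenius_frobeniusRotation, mul_one]

theorem exists_unit_mul_frobenius_sub_self_eq (ε : (𝕎 k)ˣ) (y : 𝕎 k) :
    ∃ x : (𝕎 k)ˣ, ε * frobenius (x : 𝕎 k) - x = y := by
  obtain ⟨b, hb⟩ := exists_unit_mul_frobenius_eq ε
  obtain ⟨u, hu⟩ := exists_unit_frobenius_sub_self_eq (((b⁻¹ : (𝕎 k)ˣ) : 𝕎 k) * y)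
  refine ⟨b * u, ?_⟩
  rw [Units.val_mul, map_mul, ← mul_assoc, hb, ← mul_sub, hu, Units.mul_inv_cancel_left]

end IsAlgClosed

end WittVector

theorem stmt_1 (p : ℕ) [Fact p.Prime]
    (ε₁ : (WittVector p (AlgebraicClosure (ZMod p)))ˣ)
    (ε₂ : WittVector p (AlgebraicClosure (ZMod p))) :
    ∃ x : (WittVector p (AlgebraicClosure (ZMod p)))ˣ,
      (ε₁ : WittVector p (AlgebraicClosure (ZMod p))) * WittVector.frobenius (x : WittVector p (AlgebraicClosure (ZMod p))) - x = ε₂ :=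
  WittVector.exists_unit_mul_frobenius_sub_self_eq ε₁ ε₂
end

section
/- Let p be a prime, let k̄ be an algebraic closure of the field with p elements, let W = 𝕎(k̄) be the ring of p-typical Witt vectors of k̄, and let φ : W → W be the Witt vector Frobenius. Then for every unit c ∈ W^× there exists a unit t ∈ W^× such that φ(t) = c·t. -/
/-! Over an algebraically closed field `k` of characteristic `p`,
`WittVector.frobeniusRotation` solves `φ(t) * a = t * b` whenever the constant coefficients of
`a` and `b` are nonzero, by solving `x ^ (p - 1) = b₀ / a₀` for the constant coefficient and then
a separable polynomial equation for each further coefficient. Taking `a = 1` and `b = c` gives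
`φ(t) = c * t`, and `t` is a unit because its constant coefficient is a nonzero root of
`x ^ (p - 1) = c₀`. -/

namespace WittVector

variable {p : ℕ} [Fact p.Prime]

theorem coeff_zero_ne_zero_of_isUnit {R : Type*} [CommRing R] [Nontrivial R] {x : WittVector p R}
    (hx : IsUnit x) : x.coeff 0 ≠ 0 :=
  (hx.map (constantCoeff : WittVector p R →+* R)).ne_zero

variable {k : Type*} [Field k] [CharP k p] [IsAlgClosed k]

theorem frobeniusRotation_coeff_zero_ne_zero {a b : WittVector p k} (ha : a.coeff 0 ≠ 0)
    (hb : b.coeff 0 ≠ 0) : (frobeniusRotation p ha hb).coeff 0 ≠ 0 := by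
  simpa only [frobeniusRotation, coeff_mk, frobeniusRotationCoeff] using
    RecursionBase.solution_nonzero p ha hb

theorem exists_unit_frobenius_eq_mul (c : (WittVector p k)ˣ) :
    ∃ t : (WittVector p k)ˣ, frobenius (t : WittVector p k) = c * t := by
  have h1 : (1 : WittVector p k).coeff 0 ≠ 0 := by simp
  have hc := coeff_zero_ne_zero_of_isUnit c.isUnit
  have ht := isUnit_of_coeff_zero_ne_zero _ (frobeniusRotation_coeff_zero_ne_zero h1 hc)
  refine ⟨ht.unit, ?_⟩
  rw [IsUnit.unit_spec, mul_comm (c : WittVector p k)]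
  simpa only [mul_one] using frobenius_frobeniusRotation p h1 hc

end WittVector

theorem stmt_5 (p : ℕ) [Fact p.Prime]
    (c : (WittVector p (AlgebraicClosure (ZMod p)))ˣ) :
    ∃ t : (WittVector p (AlgebraicClosure (ZMod p)))ˣ,
      WittVector.frobenius (t : WittVector p (AlgebraicClosure (ZMod p)))
        = (c : WittVector p (AlgebraicClosure (ZMod p))) * t :=
  WittVector.exists_unit_frobenius_eq_mul c
end

section
/- Let p be a prime, let k̄ be an algebraic closure of the field with p elements, let W = 𝕎(k̄) be the ring of p-typical Witt vectors of k̄, and let φ : W → W be the Witt vector Frobenius. Then for every unit ε₁ ∈ W^×, the additive map W → W sending x to ε₁·φ(x) − x is surjective. -/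
/-!
Write `f x = ε φ(x) - x`. Since `φ(p x) = p φ(x)`, `f` commutes with multiplication by `p`, so by
successive approximation in the `p`-adically complete ring `W(k̄)` it suffices that `f` be surjective
modulo `p`. Modulo `p`, with `u` the Teichmüller lift of `t`, the equation `f u ≡ c` reads
`ε₀ t ^ p - t = c₀` in `k̄`, a polynomial equation of degree `≥ 1`, which has a root.
-/

open Function Polynomial

section AdicApproximation

variable {R M N : Type*} [CommRing R] [AddCommGroup M] [Module R M] [AddCommGroup N] [Module R N]

theorem Submodule.mem_span_singleton_pow_smul_top_iff {π : R} {n : ℕ} {x : M} :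
    x ∈ (Ideal.span {π} ^ n • ⊤ : Submodule R M) ↔ ∃ z : M, π ^ n • z = x := by
  simp [Ideal.span_singleton_pow, Submodule.ideal_span_singleton_smul,
    Submodule.mem_smul_pointwise_iff_exists]

theorem AddMonoidHom.surjective_of_forall_exists_eq_add_smul {π : R}
    [IsPrecomplete (Ideal.span {π}) M] [IsHausdorff (Ideal.span {π}) N] (f : M →+ N)
    (hf : ∀ x, f (π • x) = π • f x) (hmod : ∀ y, ∃ x z, y = f x + π • z) :
    Surjective f := by
  intro y
  choose lift err hlift using hmod
  let r : ℕ → N := fun n => err^[n] y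
  let x : ℕ → M := fun n => ∑ i ∈ Finset.range n, π ^ i • lift (r i)
  have hf_pow : ∀ n v, f (π ^ n • v) = π ^ n • f v := by
    intro n v
    induction n with
    | zero => simp
    | succ n ih => rw [pow_succ', mul_smul, hf, ih, mul_smul]
  have happrox : ∀ n, y = f (x n) + π ^ n • r n := by
    intro n
    induction n with
    | zero => simp [x, r]
    | succ n ih =>
      have hr : r (n + 1) = err (r n) := Function.iterate_succ_apply' err n y
      rw [ih, hlift (r n)]
      simp only [x, Finset.sum_range_succ, map_add, hf_pow, hr, smul_add, pow_succ, mul_smul]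
      abel
  have hcauchy : ∀ {m n}, m ≤ n → x m ≡ x n [SMOD (Ideal.span {π} ^ m • ⊤ : Submodule R M)] := by
    intro m n hmn
    induction n, hmn using Nat.le_induction with
    | base => rfl
    | succ n hmn ih =>
      refine ih.trans (SModEq.sub_mem.mpr ?_)
      rw [Submodule.mem_span_singleton_pow_smul_top_iff]
      obtain ⟨k, rfl⟩ := Nat.exists_eq_add_of_le hmn
      refine ⟨-(π ^ k • lift (r (m + k))), ?_⟩
      simp only [x, Finset.sum_range_succ, smul_neg, smul_smul, ← pow_add]
      abel
  obtain ⟨L, hL⟩ := IsPrecomplete.prec ‹IsPrecomplete (Ideal.span {π}) M› hcauchy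
  refine ⟨L, (IsHausdorff.eq_iff_smodEq (I := Ideal.span {π})).mpr fun n => ?_⟩
  obtain ⟨w, hw⟩ := Submodule.mem_span_singleton_pow_smul_top_iff.mp (SModEq.sub_mem.mp (hL n))
  rw [SModEq.sub_mem, Submodule.mem_span_singleton_pow_smul_top_iff]
  refine ⟨-(f w + r n), ?_⟩
  have hL_eq : L = x n - π ^ n • w := by rw [hw]; abel
  rw [happrox n, hL_eq]
  simp only [map_sub, hf_pow, smul_neg, smul_add]
  abel

end AdicApproximation

theorem IsAlgClosed.exists_mul_pow_sub_eq_s6 {K : Type*} [Field K] [IsAlgClosed K] {n : ℕ}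
    (hn : n ≠ 1) (a c : K) : ∃ t, a * t ^ n - t = c := by
  have hdeg : (C a * X ^ n - X - C c).degree ≠ 0 := by
    intro h
    have := congrArg (coeff · 1) (eq_C_of_degree_eq_zero h)
    simp [coeff_X_pow, coeff_X, coeff_C, hn.symm] at this
  obtain ⟨t, ht⟩ := IsAlgClosed.exists_root _ hdeg
  exact ⟨t, by simpa [sub_eq_zero] using ht⟩

namespace WittVector

variable {p : ℕ} [hp : Fact p.Prime] {k : Type*} [Field k] [IsAlgClosed k] [CharP k p]

local notation "𝕎" => WittVector p

theorem exists_eq_mul_frobenius_sub_add_p_mul (ε c : 𝕎 k) :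
    ∃ u z : 𝕎 k, c = ε * frobenius u - u + p * z := by
  obtain ⟨t, ht⟩ := IsAlgClosed.exists_mul_pow_sub_eq_s6 hp.out.one_lt.ne' (ε.coeff 0) (c.coeff 0)
  have hmem : c - (ε * frobenius (teichmuller p t) - teichmuller p t) ∈ Ideal.span {(p : 𝕎 k)} := by
    rw [← ker_constantCoeff, RingHom.mem_ker, map_sub, map_sub, map_mul]
    simp only [constantCoeff_apply, coeff_frobenius_charP, teichmuller_coeff_zero, ht, sub_self]
  obtain ⟨z, hz⟩ := Ideal.mem_span_singleton.mp hmem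
  exact ⟨teichmuller p t, z, by rw [← hz]; abel⟩

theorem surjective_mul_frobenius_sub (ε : 𝕎 k) :
    Surjective fun x : 𝕎 k => ε * frobenius x - x := by
  let f : 𝕎 k →+ 𝕎 k :=
    (AddMonoidHom.mulLeft ε).comp (frobenius : 𝕎 k →+* 𝕎 k).toAddMonoidHom - AddMonoidHom.id _
  have hf (x : 𝕎 k) : f ((p : 𝕎 k) • x) = (p : 𝕎 k) • f x := by
    simp only [f, smul_eq_mul, AddMonoidHom.sub_apply, AddMonoidHom.comp_apply,
      AddMonoidHom.coe_mulLeft, RingHom.toAddMonoidHom_eq_coe, AddMonoidHom.coe_coe, map_mul,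
      map_natCast, AddMonoidHom.id_apply]
    ring
  exact f.surjective_of_forall_exists_eq_add_smul hf (exists_eq_mul_frobenius_sub_add_p_mul ε)

end WittVector

theorem stmt_6 (p : ℕ) [Fact p.Prime]
    (ε₁ : (WittVector p (AlgebraicClosure (ZMod p)))ˣ) :
    Function.Surjective (fun x : WittVector p (AlgebraicClosure (ZMod p)) =>
      (ε₁ : WittVector p (AlgebraicClosure (ZMod p))) * WittVector.frobenius x - x) :=
  WittVector.surjective_mul_frobenius_sub _
end
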